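/- Let M be an n-dimensional Riemannian manifold, b : M → ℝ smooth, harmonic, with |∇b|² = u^{2α} for smooth u > 0, satisfying the spectral condition −αΔu + Ric·u ≥ 0, and suppose 0 < α < (n−1)/(n−2) (n ≥ 3) and ∇b is nowhere vanishing. Then ∇²b ≡ 0, and hence u is locally constant. -/

import Mathlib

variable {n : ℕ}

/-- Second partial derivative (Hessian entry) of `f` at `x` in coordinate directions `i, j`. -/
noncomputable def hess (f : EuclideanSpace ℝ (Fin n) → ℝ)
    (x : EuclideanSpace ℝ (Fin n)) (i j : Fin n) : ℝ :=
  fderiv ℝ (fun y => fderiv ℝ f y (EuclideanSpace.single j 1)) x (EuclideanSpace.single i 1)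

/-- Laplacian of `f` at `x`: trace of the Hessian. -/
noncomputable def lap (f : EuclideanSpace ℝ (Fin n) → ℝ)
    (x : EuclideanSpace ℝ (Fin n)) : ℝ :=
  ∑ i, hess f x i i

/-- Squared Frobenius norm of the Hessian of `f` at `x`. -/
noncomputable def hessNormSq (f : EuclideanSpace ℝ (Fin n) → ℝ)
    (x : EuclideanSpace ℝ (Fin n)) : ℝ :=
  ∑ i, ∑ j, (hess f x i j) ^ 2


lemma hasFDerivAt_fderiv_apply {f : EuclideanSpace ℝ (Fin n) → ℝ} (hf : ContDiff ℝ (⊤ : ℕ∞) f)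
    (x w : EuclideanSpace ℝ (Fin n)) :
    HasFDerivAt (fun y => fderiv ℝ f y w)
      ((ContinuousLinearMap.apply ℝ ℝ w).comp (fderiv ℝ (fderiv ℝ f) x)) x := by
  have h1 : DifferentiableAt ℝ (fderiv ℝ f) x :=
    ((hf.fderiv_right (m := 1) (by exact WithTop.coe_le_coe.2 (le_top (a := ((1+1 : ℕ) : ℕ∞))))).differentiable one_ne_zero) x
  exact (ContinuousLinearMap.apply ℝ ℝ w).hasFDerivAt.comp x h1.hasFDerivAt

lemma hess_eq {f : EuclideanSpace ℝ (Fin n) → ℝ} (hf : ContDiff ℝ (⊤ : ℕ∞) f)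
    (x : EuclideanSpace ℝ (Fin n)) (i j : Fin n) :
    hess f x i j
      = fderiv ℝ (fderiv ℝ f) x (EuclideanSpace.single i 1) (EuclideanSpace.single j 1) := by
  rw [hess, (hasFDerivAt_fderiv_apply hf x _).fderiv]; rfl

lemma hess_symm {f : EuclideanSpace ℝ (Fin n) → ℝ} (hf : ContDiff ℝ (⊤ : ℕ∞) f)
    (x : EuclideanSpace ℝ (Fin n)) (i j : Fin n) :
    hess f x i j = hess f x j i := by
  rw [hess_eq hf, hess_eq hf]
  exact second_derivative_symmetric
    (fun y => ((hf.differentiable (by simp)) y).hasFDerivAt)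
    (((hf.fderiv_right (m := 1) (by exact WithTop.coe_le_coe.2 (le_top (a := ((1+1 : ℕ) : ℕ∞))))).differentiable one_ne_zero) x).hasFDerivAt _ _

lemma grad_norm_sq (b : EuclideanSpace ℝ (Fin n) → ℝ) (y : EuclideanSpace ℝ (Fin n)) :
    ‖gradient b y‖ ^ 2 = ∑ k, (fderiv ℝ b y (EuclideanSpace.single k 1)) ^ 2 := by
  have hco : ∀ k : Fin n, (gradient b y) k = fderiv ℝ b y (EuclideanSpace.single k 1) := by
    intro k
    have h1 : (gradient b y) k = @inner ℝ _ _ (EuclideanSpace.single k (1:ℝ)) (gradient b y) := by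
      rw [EuclideanSpace.inner_single_left]; simp
    rw [h1, real_inner_comm, gradient, InnerProductSpace.toDual_symm_apply]
  have h2 := EuclideanSpace.norm_eq (gradient b y)
  rw [h2, Real.sq_sqrt (by positivity)]
  refine Finset.sum_congr rfl fun k _ => ?_
  rw [← hco k]; simp [sq_abs]

lemma clm_eq_zero (L : EuclideanSpace ℝ (Fin n) →L[ℝ] ℝ)
    (h : ∀ i, L (EuclideanSpace.single i 1) = 0) : L = 0 := by
  ext v
  have hv := (EuclideanSpace.basisFun (Fin n) ℝ).sum_repr v
  simp only [EuclideanSpace.basisFun_apply, EuclideanSpace.basisFun_repr] at hv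
  rw [← hv]; simp [h]


lemma kato_unit (hn : 2 ≤ n) (H : Fin n → Fin n → ℝ)
    (hsym : ∀ i j, H i j = H j i) (htr : ∑ i, H i i = 0)
    (v : Fin n → ℝ) (hv : ∑ i, v i ^ 2 = 1) :
    (n : ℝ) * ∑ i, (∑ k, H i k * v k) ^ 2 ≤ ((n : ℝ) - 1) * ∑ i, ∑ j, H i j ^ 2 := by
  classical
  set a : ℝ := ∑ i, ∑ j, H i j * v i * v j with ha
  set c : Fin n → ℝ := fun i => ∑ k, H i k * v k with hc
  set bb : Fin n → ℝ := fun i => c i - a * v i with hbb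
  have hcb : ∀ i, c i = bb i + a * v i := by intro i; simp [hbb]
  set Sb : ℝ := ∑ i, bb i ^ 2 with hSb
  set SH : ℝ := ∑ i, ∑ j, H i j ^ 2 with hSH
  have hSbnn : 0 ≤ Sb := Finset.sum_nonneg fun i _ => sq_nonneg _
  have hcv : ∑ i, c i * v i = a := by
    rw [ha]
    refine Finset.sum_congr rfl fun i _ => ?_
    rw [show c i = ∑ k, H i k * v k from rfl, Finset.sum_mul]
    exact Finset.sum_congr rfl fun k _ => by ring
  have hbv : ∑ i, bb i * v i = 0 := by
    have h1 : ∑ i, bb i * v i = (∑ i, c i * v i) - a * ∑ i, v i ^ 2 := by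
      rw [Finset.mul_sum, ← Finset.sum_sub_distrib]
      refine Finset.sum_congr rfl fun i _ => ?_
      rw [hbb]; ring
    rw [h1, hcv, hv]; ring
  have hc2 : ∑ i, c i ^ 2 = Sb + a ^ 2 := by
    have h1 : ∀ i, c i ^ 2 = bb i ^ 2 + (2 * a) * (bb i * v i) + a ^ 2 * v i ^ 2 := by
      intro i; rw [hcb i]; ring
    rw [Finset.sum_congr rfl fun i _ => h1 i]
    rw [Finset.sum_add_distrib, Finset.sum_add_distrib, ← Finset.mul_sum, ← Finset.mul_sum,
      hbv, hv]
    ring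
  have hHtv : ∀ j, ∑ i, H i j * v i = c j := by
    intro j
    rw [show c j = ∑ k, H j k * v k from rfl]
    exact Finset.sum_congr rfl fun i _ => by rw [hsym i j]
  have hvHb : ∑ i, v i * (∑ j, H i j * bb j) = Sb := by
    have h1 : ∑ i, v i * (∑ j, H i j * bb j) = ∑ i, ∑ j, (H i j * v i) * bb j := by
      refine Finset.sum_congr rfl fun i _ => ?_
      rw [Finset.mul_sum]
      exact Finset.sum_congr rfl fun j _ => by ring
    rw [h1, Finset.sum_comm]
    have h2 : ∀ j, ∑ i, (H i j * v i) * bb j = bb j * c j := by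
      intro j
      rw [← hHtv j, Finset.mul_sum]
      exact Finset.sum_congr rfl fun i _ => by ring
    rw [Finset.sum_congr rfl fun j _ => h2 j]
    have h3 : ∀ j, bb j * c j = bb j ^ 2 + a * (bb j * v j) := by
      intro j; rw [hcb j]; ring
    rw [Finset.sum_congr rfl fun j _ => h3 j, Finset.sum_add_distrib, ← Finset.mul_sum, hbv,
      ← hSb]
    ring
  set R : Fin n → Fin n → ℝ := fun i j => H i j - c i * v j - v i * bb j with hR
  set Rs : ℝ := ∑ i, ∑ j, R i j ^ 2 with hRs
  have hRsnn : 0 ≤ Rs := Finset.sum_nonneg fun i _ => Finset.sum_nonneg fun j _ => sq_nonneg _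
  -- row expansion
  have hrow : ∀ i, ∑ j, R i j ^ 2
      = (∑ j, H i j ^ 2) - c i ^ 2 + v i ^ 2 * Sb - 2 * (v i * (∑ j, H i j * bb j)) := by
    intro i
    have expand : ∀ j, R i j ^ 2 = H i j ^ 2 + c i ^ 2 * v j ^ 2 + v i ^ 2 * bb j ^ 2
        - (2 * c i) * (H i j * v j) - (2 * v i) * (H i j * bb j)
        + (2 * (c i * v i)) * (bb j * v j) := by
      intro j; rw [show R i j = H i j - c i * v j - v i * bb j from rfl]; ring
    rw [Finset.sum_congr rfl fun j _ => expand j]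
    rw [Finset.sum_add_distrib, Finset.sum_sub_distrib, Finset.sum_sub_distrib,
      Finset.sum_add_distrib, Finset.sum_add_distrib,
      ← Finset.mul_sum, ← Finset.mul_sum, ← Finset.mul_sum, ← Finset.mul_sum, ← Finset.mul_sum,
      hv, hbv, show (∑ j, H i j * v j) = c i from rfl]
    ring
  have hRsval : Rs = SH - a ^ 2 - 2 * Sb := by
    rw [hRs, Finset.sum_congr rfl fun i _ => hrow i]
    rw [Finset.sum_sub_distrib, Finset.sum_add_distrib, Finset.sum_sub_distrib,
      ← Finset.mul_sum, hvHb, ← Finset.sum_mul, hv, hc2, ← hSH]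
    ring
  -- R has zero rows against v
  have hRv : ∀ i, ∑ j, v j * R i j = 0 := by
    intro i
    have h1 : ∀ j, v j * R i j = H i j * v j - c i * v j ^ 2 - (v i) * (bb j * v j) := by
      intro j; rw [show R i j = H i j - c i * v j - v i * bb j from rfl]; ring
    rw [Finset.sum_congr rfl fun j _ => h1 j, Finset.sum_sub_distrib, Finset.sum_sub_distrib,
      ← Finset.mul_sum, ← Finset.mul_sum, hv, hbv, show (∑ j, H i j * v j) = c i from rfl]
    ring
  have htrR : ∑ i, R i i = -a := by
    have h1 : ∀ i, R i i = H i i - c i * v i - bb i * v i := by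
      intro i; rw [show R i i = H i i - c i * v i - v i * bb i from rfl]; ring
    rw [Finset.sum_congr rfl fun i _ => h1 i, Finset.sum_sub_distrib, Finset.sum_sub_distrib,
      htr, hcv, hbv]
    ring
  -- Cauchy-Schwarz with the projection P
  set P : Fin n → Fin n → ℝ := fun i j => (if i = j then (1:ℝ) else 0) - v i * v j with hP
  have hPR : ∑ i, ∑ j, P i j * R i j = -a := by
    have h1 : ∀ i, ∑ j, P i j * R i j = R i i - v i * ∑ j, v j * R i j := by
      intro i
      have h2 : ∀ j, P i j * R i j = (if i = j then R i j else 0) - v i * (v j * R i j) := by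
        intro j
        rw [show P i j = (if i = j then (1:ℝ) else 0) - v i * v j from rfl]
        by_cases h : i = j <;> simp [h] <;> ring
      rw [Finset.sum_congr rfl fun j _ => h2 j, Finset.sum_sub_distrib, ← Finset.mul_sum,
        Finset.sum_ite_eq]
      simp
    rw [Finset.sum_congr rfl fun i _ => h1 i, Finset.sum_sub_distrib, htrR,
      Finset.sum_eq_zero fun i _ => by rw [hRv i, mul_zero]]
    ring
  have hPP : ∑ i, ∑ j, P i j ^ 2 = (n : ℝ) - 1 := by
    have h1 : ∀ i, ∑ j, P i j ^ 2 = 1 - v i ^ 2 := by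
      intro i
      have h2 : ∀ j, P i j ^ 2 = (if i = j then (1:ℝ) else 0)
          - (2 * (v i * v i)) * (if i = j then v j * v j else 0) + v i ^ 2 * v j ^ 2
          + ((2 * (v i * v i)) * (if i = j then v j * v j else 0)
            - (2 * v i) * ((if i = j then (1:ℝ) else 0) * v j)) := by
        intro j
        rw [show P i j = (if i = j then (1:ℝ) else 0) - v i * v j from rfl]
        by_cases h : i = j <;> simp [h] <;> ring
      rw [Finset.sum_congr rfl fun j _ => h2 j]
      simp only [Finset.sum_add_distrib, Finset.sum_sub_distrib, ← Finset.mul_sum,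
        Finset.sum_ite_eq, Finset.mem_univ, if_true, hv]
      simp [hv]
      ring
    rw [Finset.sum_congr rfl fun i _ => h1 i, Finset.sum_sub_distrib, hv]
    simp
  -- Cauchy-Schwarz
  have hCS : a ^ 2 ≤ ((n : ℝ) - 1) * Rs := by
    have h1 := Finset.sum_mul_sq_le_sq_mul_sq Finset.univ
      (fun p : Fin n × Fin n => P p.1 p.2) (fun p : Fin n × Fin n => R p.1 p.2)
    rw [← Finset.univ_product_univ] at h1
    rw [Finset.sum_product, Finset.sum_product, Finset.sum_product] at h1
    simp only [] at h1
    rw [hPR, hPP] at h1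
    calc a ^ 2 = (-a) ^ 2 := by ring
    _ ≤ ((n:ℝ) - 1) * Rs := by rw [hRs]; exact h1
  -- conclude
  have hgoal : ∑ i, (∑ k, H i k * v k) ^ 2 = Sb + a ^ 2 := by
    rw [← hc2]
  rw [hgoal]
  have hn2 : (2 : ℝ) ≤ (n : ℝ) := by exact_mod_cast hn
  nlinarith [mul_nonneg (by linarith : (0:ℝ) ≤ (n:ℝ) - 2) hSbnn, hRsval, hCS, hRsnn]

lemma kato (hn : 2 ≤ n) (H : Fin n → Fin n → ℝ)
    (hsym : ∀ i j, H i j = H j i) (htr : ∑ i, H i i = 0)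
    (v : Fin n → ℝ) (hvpos : 0 < ∑ i, v i ^ 2) :
    (n : ℝ) * ∑ i, (∑ k, H i k * v k) ^ 2
      ≤ ((n : ℝ) - 1) * (∑ i, ∑ j, H i j ^ 2) * (∑ i, v i ^ 2) := by
  set cc := ∑ i, v i ^ 2 with hcc
  set s := Real.sqrt cc with hs
  have hspos : 0 < s := Real.sqrt_pos.2 hvpos
  have hs2 : s ^ 2 = cc := Real.sq_sqrt hvpos.le
  have hunit : ∑ i, (v i / s) ^ 2 = 1 := by
    simp only [div_pow, ← Finset.sum_div, hs2]
    exact div_self hvpos.ne'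
  have h1 := kato_unit hn H hsym htr (fun i => v i / s) hunit
  have h2 : ∀ i : Fin n, ∑ k, H i k * (v k / s) = (∑ k, H i k * v k) / s := by
    intro i
    rw [Finset.sum_div]
    exact Finset.sum_congr rfl fun k _ => by ring
  rw [Finset.sum_congr rfl fun i _ => by rw [h2 i]] at h1
  have h3 : ∑ i, ((∑ k, H i k * v k) / s) ^ 2 = (∑ i, (∑ k, H i k * v k) ^ 2) / cc := by
    rw [Finset.sum_div]
    exact Finset.sum_congr rfl fun i _ => by rw [div_pow, hs2]
  rw [h3] at h1
  rw [← mul_div_assoc] at h1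
  rw [← div_le_iff₀ hvpos]
  exact h1

lemma fderivAt_rpow {u : EuclideanSpace ℝ (Fin n) → ℝ} (hu : ContDiff ℝ (⊤ : ℕ∞) u)
    (hupos : ∀ x, 0 < u x) (p : ℝ) (x : EuclideanSpace ℝ (Fin n)) :
    HasFDerivAt (fun y => u y ^ p) ((p * u x ^ (p - 1)) • fderiv ℝ u x) x :=
  (((hu.differentiable (by simp)) x).hasFDerivAt).rpow_const (Or.inl (hupos x).ne')

lemma hess_rpow {u : EuclideanSpace ℝ (Fin n) → ℝ} (hu : ContDiff ℝ (⊤ : ℕ∞) u)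
    (hupos : ∀ x, 0 < u x) (p : ℝ) (x : EuclideanSpace ℝ (Fin n)) (i j : Fin n) :
    hess (fun y => u y ^ p) x i j
      = p * u x ^ (p - 1) * hess u x i j
        + p * (p - 1) * u x ^ (p - 2) * (fderiv ℝ u x (EuclideanSpace.single i 1))
          * (fderiv ℝ u x (EuclideanSpace.single j 1)) := by
  have hfun : (fun y => fderiv ℝ (fun z => u z ^ p) y (EuclideanSpace.single j 1))
      = fun y => (p * u y ^ (p - 1)) * fderiv ℝ u y (EuclideanSpace.single j 1) := by
    funext y
    rw [(fderivAt_rpow hu hupos p y).fderiv]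
    simp
  have hA : HasFDerivAt (fun y => p * u y ^ (p - 1))
      ((p * ((p - 1) * u x ^ (p - 2))) • fderiv ℝ u x) x := by
    have h0 := (fderivAt_rpow hu hupos (p - 1) x).const_mul p
    have : p • (((p - 1) * u x ^ (p - 1 - 1)) • fderiv ℝ u x)
        = (p * ((p - 1) * u x ^ (p - 2))) • fderiv ℝ u x := by
      rw [smul_smul]
      norm_num [sub_sub]
    rwa [this] at h0
  have hB := hasFDerivAt_fderiv_apply hu x (EuclideanSpace.single j 1)
  have hAB := hA.mul hB
  have hhu : ((ContinuousLinearMap.apply ℝ ℝ (EuclideanSpace.single j 1)).comp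
      (fderiv ℝ (fderiv ℝ u) x)) (EuclideanSpace.single i 1) = hess u x i j := by
    rw [hess, hB.fderiv]
  rw [hess, hfun, (show HasFDerivAt (fun y => p * u y ^ (p - 1) * fderiv ℝ u y (EuclideanSpace.single j 1)) _ x from hAB).fderiv]
  simp only [ContinuousLinearMap.add_apply, ContinuousLinearMap.coe_smul',
    Pi.smul_apply, smul_eq_mul]
  rw [hhu]
  ring

set_option maxHeartbeats 1000000 in
/-- Rigidity: `b` smooth harmonic with `|∇b|² = u^{2α}`, `u > 0` smooth, the spectral
condition `−αΔu + Ric·u ≥ 0` (with `Ric` the pointwise smallest Ricci eigenvalue, so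
that `Ric·|∇b|² ≤ Ric(∇b,∇b)`), `0 < α < (n−1)/(n−2)`, `n ≥ 3`, and `∇b` nowhere
vanishing imply `∇²b ≡ 0`, hence `u` is (locally) constant. -/
theorem stmt_10 (hn : 3 ≤ n) (b u : EuclideanSpace ℝ (Fin n) → ℝ)
    (Ric RicQ : EuclideanSpace ℝ (Fin n) → ℝ)
    (hb : ContDiff ℝ (⊤ : ℕ∞) b) (hu : ContDiff ℝ (⊤ : ℕ∞) u) (hupos : ∀ x, 0 < u x)
    (α : ℝ) (hα : 0 < α) (hα' : α < ((n : ℝ) - 1) / ((n : ℝ) - 2))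
    (hharm : ∀ x, lap b x = 0)
    (hgrad : ∀ x, ‖gradient b x‖ ^ 2 = u x ^ (2 * α))
    (hgradne : ∀ x, gradient b x ≠ 0)
    (hspec : ∀ x, 0 ≤ -α * lap u x + Ric x * u x)
    (hRicLow : ∀ x, Ric x * ‖gradient b x‖ ^ 2 ≤ RicQ x)
    (hBochner : ∀ x, (1 / 2) * lap (fun y => ‖gradient b y‖ ^ 2) x
      = hessNormSq b x + RicQ x) :
    (∀ x, ∀ i j : Fin n, hess b x i j = 0) ∧ (∀ x, fderiv ℝ u x = 0) := by
  classical
  -- pointwise: prove hessNormSq = 0 and fderiv u = 0 at every x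
  have main : ∀ x, hessNormSq b x = 0 ∧
      (∀ i, fderiv ℝ u x (EuclideanSpace.single i 1) = 0) := by
    intro x
    set p : ℝ := 2 * α with hp
    set U : ℝ := u x with hU
    have hUpos : 0 < U := hupos x
    set w : Fin n → ℝ := fun i => fderiv ℝ u x (EuclideanSpace.single i 1) with hw
    set g : Fin n → ℝ := fun k => fderiv ℝ b x (EuclideanSpace.single k 1) with hg
    set G : ℝ := ∑ i, w i ^ 2 with hG
    have hGnn : 0 ≤ G := Finset.sum_nonneg fun i _ => sq_nonneg _
    set S : ℝ := hessNormSq b x with hS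
    have hSnn : 0 ≤ S := Finset.sum_nonneg fun i _ =>
      Finset.sum_nonneg fun j _ => sq_nonneg _
    set Du : ℝ := lap u x with hDu
    -- the two functions agree
    have hfeq : (fun y => ‖gradient b y‖ ^ 2) = fun y => u y ^ p := funext hgrad
    have hfeq2 : (fun y => ‖gradient b y‖ ^ 2)
        = fun y => ∑ k, (fderiv ℝ b y (EuclideanSpace.single k 1)) ^ 2 :=
      funext (grad_norm_sq b)
    -- Laplacian of u^p
    have hlapP : lap (fun y => u y ^ p) x
        = p * U ^ (p - 1) * Du + p * (p - 1) * U ^ (p - 2) * G := by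
      rw [lap, Finset.sum_congr rfl fun i _ => hess_rpow hu hupos p x i i]
      rw [Finset.sum_add_distrib, ← Finset.mul_sum]
      have h2 : ∑ i, (p * (p - 1) * u x ^ (p - 2)
            * (fderiv ℝ u x (EuclideanSpace.single i 1))
            * (fderiv ℝ u x (EuclideanSpace.single i 1)))
          = p * (p - 1) * U ^ (p - 2) * G := by
        rw [hG, Finset.mul_sum]
        refine Finset.sum_congr rfl fun i _ => ?_
        simp only [hw, hU]
        ring
      rw [h2, hDu, lap, hU]
    -- first derivative identity : ∑_k g k * hess b x i k = α U^(p-1) w i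
    have hKD : ∀ i, ∑ k, hess b x i k * g k = α * U ^ (p - 1) * w i := by
      have hLk : ∀ k, HasFDerivAt (fun y => fderiv ℝ b y (EuclideanSpace.single k 1))
          ((ContinuousLinearMap.apply ℝ ℝ (EuclideanSpace.single k 1)).comp
            (fderiv ℝ (fderiv ℝ b) x)) x := fun k => hasFDerivAt_fderiv_apply hb x _
      have hsq : HasFDerivAt (fun y => ∑ k, (fderiv ℝ b y (EuclideanSpace.single k 1)) ^ 2)
          (∑ k, (2 * g k) • ((ContinuousLinearMap.apply ℝ ℝ (EuclideanSpace.single k 1)).comp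
            (fderiv ℝ (fderiv ℝ b) x))) x := by
        refine HasFDerivAt.fun_sum fun k _ => ?_
        have h0 := (hLk k).mul (hLk k)
        have heq : g k • ((ContinuousLinearMap.apply ℝ ℝ (EuclideanSpace.single k 1)).comp
              (fderiv ℝ (fderiv ℝ b) x))
            + g k • ((ContinuousLinearMap.apply ℝ ℝ (EuclideanSpace.single k 1)).comp
              (fderiv ℝ (fderiv ℝ b) x))
            = (2 * g k) • ((ContinuousLinearMap.apply ℝ ℝ (EuclideanSpace.single k 1)).comp
              (fderiv ℝ (fderiv ℝ b) x)) := by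
          rw [two_mul, add_smul]
        have h1 : HasFDerivAt (fun y => (fderiv ℝ b y (EuclideanSpace.single k 1))
            * (fderiv ℝ b y (EuclideanSpace.single k 1)))
            ((2 * g k) • ((ContinuousLinearMap.apply ℝ ℝ (EuclideanSpace.single k 1)).comp
              (fderiv ℝ (fderiv ℝ b) x))) x := by
          rw [← heq]; exact h0
        have : (fun y => (fderiv ℝ b y (EuclideanSpace.single k 1)) ^ 2)
            = fun y => (fderiv ℝ b y (EuclideanSpace.single k 1))
              * (fderiv ℝ b y (EuclideanSpace.single k 1)) := by
          funext y; ring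
        rw [this]; exact h1
      have hPder := fderivAt_rpow hu hupos p x
      have hfd1 : fderiv ℝ (fun y => ∑ k, (fderiv ℝ b y (EuclideanSpace.single k 1)) ^ 2) x
          = fderiv ℝ (fun y => u y ^ p) x := by rw [← hfeq2, hfeq]
      have hder : (∑ k, (2 * g k) • ((ContinuousLinearMap.apply ℝ ℝ
            (EuclideanSpace.single k 1)).comp (fderiv ℝ (fderiv ℝ b) x)))
          = (p * U ^ (p - 1)) • fderiv ℝ u x := by
        rw [← hsq.fderiv, hfd1, hPder.fderiv]
      intro i
      have happ := congrArg (fun (L : EuclideanSpace ℝ (Fin n) →L[ℝ] ℝ)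
        => L (EuclideanSpace.single i 1)) hder
      simp only [ContinuousLinearMap.sum_apply, ContinuousLinearMap.coe_smul',
        Pi.smul_apply, smul_eq_mul] at happ
      have hLki : ∀ k, ((ContinuousLinearMap.apply ℝ ℝ (EuclideanSpace.single k 1)).comp
          (fderiv ℝ (fderiv ℝ b) x)) (EuclideanSpace.single i 1) = hess b x i k := by
        intro k; rw [hess, (hLk k).fderiv]
      rw [Finset.sum_congr rfl fun k _ => by rw [hLki k]] at happ
      -- happ : ∑ k, 2 * g k * hess b x i k = p * U^(p-1) * w i
      have h2 : ∑ k, hess b x i k * g k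
          = (∑ k, 2 * g k * hess b x i k) / 2 := by
        rw [Finset.sum_div]
        exact Finset.sum_congr rfl fun k _ => by ring
      rw [h2, happ, hp, hw]
      ring
    -- trace and symmetry for Kato
    have hsym : ∀ i j, hess b x i j = hess b x j i := hess_symm hb x
    have htr : ∑ i, hess b x i i = 0 := hharm x
    have hgsq : ∑ k, g k ^ 2 = U ^ p := by
      rw [hg, ← grad_norm_sq b x, hgrad x, hp, hU]
    have hUp : (0:ℝ) < U ^ p := Real.rpow_pos_of_pos hUpos p
    have hgpos : 0 < ∑ k, g k ^ 2 := by rw [hgsq]; exact hUp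
    have hkato := kato (by omega) (fun i j => hess b x i j) hsym htr g hgpos
    -- substitute hKD into kato
    have hkato2 : (n:ℝ) * (α ^ 2 * (U ^ (p-1)) ^ 2 * G) ≤ ((n:ℝ) - 1) * S * U ^ p := by
      have e1 : ∑ i, (∑ k, hess b x i k * g k) ^ 2 = α ^ 2 * (U ^ (p-1)) ^ 2 * G := by
        rw [Finset.sum_congr rfl fun i _ => by rw [hKD i], hG, Finset.mul_sum]
        exact Finset.sum_congr rfl fun i _ => by ring
      have e2 : (∑ i, ∑ j, hess b x i j ^ 2) = S := rfl
      rw [← e1, ← e2, ← hgsq]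
      exact hkato
    -- Bochner + spectral
    have hboch := hBochner x
    rw [hfeq, hlapP] at hboch
    have hrlow := hRicLow x
    rw [hgrad x] at hrlow
    have hsp := hspec x
    -- Ric x * U^p ≥ α * Du * U^(p-1)
    have hUp1pos : (0:ℝ) < U ^ (p-1) := Real.rpow_pos_of_pos hUpos _
    have hsplit : U ^ p = U * U ^ (p - 1) := by
      have : U ^ p = U ^ ((1:ℝ) + (p - 1)) := by norm_num
      rw [this, Real.rpow_add hUpos, Real.rpow_one]
    have hspec2 : α * Du * U ^ (p-1) ≤ Ric x * U ^ p := by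
      rw [hsplit, ← mul_assoc]
      have h0 : α * Du ≤ Ric x * U := by rw [hDu, hU]; linarith
      exact mul_le_mul_of_nonneg_right h0 hUp1pos.le
    -- E4 : S ≤ α (2α − 1) U^(p−2) G
    have hE4 : S ≤ α * (2 * α - 1) * U ^ (p - 2) * G := by
      have h0 : RicQ x ≥ α * Du * U ^ (p-1) := le_trans hspec2 hrlow
      have h1' : α * U ^ (p-1) * Du + α * (2 * α - 1) * U ^ (p-2) * G
          = S + RicQ x := by
        rw [hS, ← hboch, hp]; ring
      linarith [h1', h0]
    -- combine with kato
    have hsq2 : (U ^ (p-1)) ^ 2 = U ^ (p-2) * U ^ p := by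
      rw [sq, ← Real.rpow_add hUpos, ← Real.rpow_add hUpos]
      congr 1; ring
    have hn3 : (3:ℝ) ≤ (n:ℝ) := by exact_mod_cast hn
    have hn2' : (0:ℝ) < (n:ℝ) - 2 := by linarith
    have hcoef : 0 < ((n:ℝ) - 1) - ((n:ℝ) - 2) * α := by
      have := (lt_div_iff₀ hn2').1 hα'
      linarith
    have hUp2pos : (0:ℝ) < U ^ (p-2) := Real.rpow_pos_of_pos hUpos _
    have hGzero : G = 0 := by
      by_contra hne
      have hGpos : 0 < G := lt_of_le_of_ne hGnn (Ne.symm hne)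
      have hfinal : (n:ℝ) * (α ^ 2 * (U ^ (p-2) * U ^ p) * G)
          ≤ ((n:ℝ) - 1) * (α * (2 * α - 1) * U ^ (p-2) * G) * U ^ p := by
        calc (n:ℝ) * (α ^ 2 * (U ^ (p-2) * U ^ p) * G)
            = (n:ℝ) * (α ^ 2 * (U ^ (p-1)) ^ 2 * G) := by rw [hsq2]
          _ ≤ ((n:ℝ) - 1) * S * U ^ p := hkato2
          _ ≤ ((n:ℝ) - 1) * (α * (2 * α - 1) * U ^ (p-2) * G) * U ^ p := by
              have hc : 0 ≤ ((n:ℝ) - 1) * U ^ p := mul_nonneg (by linarith) hUp.le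
              calc ((n:ℝ) - 1) * S * U ^ p
                  = (((n:ℝ) - 1) * U ^ p) * S := by ring
                _ ≤ (((n:ℝ) - 1) * U ^ p) * (α * (2 * α - 1) * U ^ (p-2) * G) :=
                    mul_le_mul_of_nonneg_left hE4 hc
                _ = ((n:ℝ) - 1) * (α * (2 * α - 1) * U ^ (p-2) * G) * U ^ p := by ring
      have hX : 0 < U ^ (p-2) * U ^ p * G := mul_pos (mul_pos hUp2pos hUp) hGpos
      have h2 : ((n:ℝ) * α ^ 2) * (U ^ (p-2) * U ^ p * G)
          ≤ (((n:ℝ) - 1) * (α * (2 * α - 1))) * (U ^ (p-2) * U ^ p * G) := by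
        calc ((n:ℝ) * α ^ 2) * (U ^ (p-2) * U ^ p * G)
            = (n:ℝ) * (α ^ 2 * (U ^ (p-2) * U ^ p) * G) := by ring
          _ ≤ ((n:ℝ) - 1) * (α * (2 * α - 1) * U ^ (p-2) * G) * U ^ p := hfinal
          _ = (((n:ℝ) - 1) * (α * (2 * α - 1))) * (U ^ (p-2) * U ^ p * G) := by ring
      have h3 := (mul_le_mul_iff_of_pos_right hX).1 h2
      nlinarith [mul_pos hα hcoef, h3]
    have hSzero : S = 0 := by
      have := hE4
      rw [hGzero] at this
      nlinarith [hSnn, this]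
    constructor
    · exact hSzero
    · intro i
      have h1 : w i ^ 2 ≤ G := Finset.single_le_sum
        (f := fun i => w i ^ 2) (fun _ _ => sq_nonneg _) (Finset.mem_univ i)
      rw [hGzero] at h1
      have : w i ^ 2 = 0 := le_antisymm h1 (sq_nonneg _)
      have := pow_eq_zero_iff (n := 2) (by norm_num) |>.1 this
      rw [hw] at this
      exact this
  constructor
  · intro x i j
    have hS0 := (main x).1
    have h1 : (hess b x i j) ^ 2 ≤ ∑ j, (hess b x i j) ^ 2 :=
      Finset.single_le_sum (f := fun j => (hess b x i j) ^ 2)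
        (fun _ _ => sq_nonneg _) (Finset.mem_univ j)
    have h2 : (∑ j, (hess b x i j) ^ 2) ≤ hessNormSq b x :=
      Finset.single_le_sum (f := fun i => ∑ j, (hess b x i j) ^ 2)
        (fun _ _ => Finset.sum_nonneg fun _ _ => sq_nonneg _) (Finset.mem_univ i)
    have h3 : (hess b x i j) ^ 2 ≤ 0 := by rw [← hS0]; exact le_trans h1 h2
    have := le_antisymm h3 (sq_nonneg _)
    exact pow_eq_zero_iff (n := 2) (by norm_num) |>.1 this
  · intro x
    exact clm_eq_zero _ (main x).2
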